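/- arXiv:math/9209211 — 2 statements merged into one kernel-verified Lean document; each statement's English description precedes it below -/
import Mathlib

section
/- Let 𝒢 be a finite subgroup of GL_n(ℂ) whose linear span is all of M_n(ℂ). Then (1/|𝒢|) Σ_{g∈𝒢} g⊗g^{-1} equals the canonical diagonal d₀ = (1/n) Σ_{i,j=1..n} e_{ij}⊗e_{ji} in M_n(ℂ)⊗M_n(ℂ). Moreover, d₀ is the unique element of M_n(ℂ)⊗M_n(ℂ) which is simultaneously a diagonal for M_n(ℂ) and a diagonal for the opposite algebra M_n(ℂ)^{op}. -/
open scoped TensorProduct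
open Matrix
open scoped Kronecker

noncomputable section

/-- `d ∈ M_n(ℂ) ⊗ M_n(ℂ)` is a *diagonal* for `M_n(ℂ)`: `a·d = d·a` for all `a`
(with actions `a·(b⊗c) = (ab)⊗c`, `(b⊗c)·a = b⊗(ca)`), and `π(d) = 1` where
`π(b⊗c) = bc`. -/
def Matrix.IsDiagonalTensor {n : ℕ} (d : Matrix (Fin n) (Fin n) ℂ ⊗[ℂ] Matrix (Fin n) (Fin n) ℂ) :
    Prop :=
  (∀ a : Matrix (Fin n) (Fin n) ℂ,
      TensorProduct.map (LinearMap.mulLeft ℂ a) LinearMap.id d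
        = TensorProduct.map LinearMap.id (LinearMap.mulRight ℂ a) d) ∧
    LinearMap.mul' ℂ (Matrix (Fin n) (Fin n) ℂ) d = 1

/-- `d` is a diagonal for the opposite algebra `M_n(ℂ)^{op}`:
`∑ (a_i a) ⊗ b_i = ∑ a_i ⊗ (a b_i)` for all `a`, and `π_op(d) = 1` where
`π_op(b⊗c) = cb`. -/
def Matrix.IsOpDiagonalTensor {n : ℕ}
    (d : Matrix (Fin n) (Fin n) ℂ ⊗[ℂ] Matrix (Fin n) (Fin n) ℂ) : Prop :=
  (∀ a : Matrix (Fin n) (Fin n) ℂ,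
      TensorProduct.map (LinearMap.mulRight ℂ a) LinearMap.id d
        = TensorProduct.map LinearMap.id (LinearMap.mulLeft ℂ a) d) ∧
    LinearMap.mul' ℂ (Matrix (Fin n) (Fin n) ℂ)
      (TensorProduct.comm ℂ _ _ d) = 1

/-- The canonical diagonal `d₀ = (1/n) ∑_{i,j} e_{ij} ⊗ e_{ji}` of `M_n(ℂ)`. -/
def Matrix.canonicalDiagonal (n : ℕ) :
    Matrix (Fin n) (Fin n) ℂ ⊗[ℂ] Matrix (Fin n) (Fin n) ℂ :=
  (n : ℂ)⁻¹ • ∑ i : Fin n, ∑ j : Fin n,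
    Matrix.single i j (1 : ℂ) ⊗ₜ[ℂ] Matrix.single j i (1 : ℂ)

namespace Prop32Aux

variable {n : ℕ}

abbrev M (n : ℕ) := Matrix (Fin n) (Fin n) ℂ
abbrev K (n : ℕ) := Matrix (Fin n × Fin n) (Fin n × Fin n) ℂ

def toKron : M n ⊗[ℂ] M n →ₗ[ℂ] K n :=
  TensorProduct.lift Matrix.kroneckerBilinear

@[simp] lemma toKron_tmul (a b : M n) : toKron (a ⊗ₜ[ℂ] b) = a ⊗ₖ b := rfl

lemma stdBasisMatrix_kron (i j k l : Fin n) :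
    (single i j (1:ℂ)) ⊗ₖ (single k l (1:ℂ))
      = single (i,k) (j,l) (1:ℂ) := by
  ext ⟨p,q⟩ ⟨r,s⟩
  simp [single, Prod.ext_iff, ite_and]
  aesop

lemma toKron_injective : Function.Injective (toKron (n := n)) := by
  have h : toKron (n := n)
      = (((Matrix.stdBasis ℂ (Fin n) (Fin n)).tensorProduct
          (Matrix.stdBasis ℂ (Fin n) (Fin n))).equiv
          (Matrix.stdBasis ℂ (Fin n × Fin n) (Fin n × Fin n))
          ⟨fun p => ((p.1.1, p.2.1), (p.1.2, p.2.2)),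
           fun p => ((p.1.1, p.2.1), (p.1.2, p.2.2)),
           fun p => rfl, fun p => rfl⟩ : _ ≃ₗ[ℂ] _).toLinearMap := by
    apply ((Matrix.stdBasis ℂ (Fin n) (Fin n)).tensorProduct
          (Matrix.stdBasis ℂ (Fin n) (Fin n))).ext
    rintro ⟨⟨i,j⟩,⟨k,l⟩⟩
    simp only [LinearEquiv.coe_coe, Module.Basis.equiv_apply, Equiv.coe_fn_mk]
    rw [Module.Basis.tensorProduct_apply, Matrix.stdBasis_eq_single,
      Matrix.stdBasis_eq_single, Matrix.stdBasis_eq_single]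
    simp [stdBasisMatrix_kron]
  rw [h]
  exact LinearEquiv.injective _


lemma toKron_mulLeft (a : M n) (d : M n ⊗[ℂ] M n) :
    toKron (TensorProduct.map (LinearMap.mulLeft ℂ a) LinearMap.id d)
      = (a ⊗ₖ (1 : M n)) * toKron d := by
  induction d using TensorProduct.induction_on with
  | zero => simp
  | tmul b c =>
      simp only [TensorProduct.map_tmul, LinearMap.mulLeft_apply, LinearMap.id_coe, id_eq,
        toKron_tmul]
      rw [← Matrix.mul_kronecker_mul, one_mul]
  | add x y hx hy => simp [map_add, hx, hy, mul_add]

lemma toKron_mulRight (a : M n) (d : M n ⊗[ℂ] M n) :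
    toKron (TensorProduct.map LinearMap.id (LinearMap.mulRight ℂ a) d)
      = toKron d * ((1 : M n) ⊗ₖ a) := by
  induction d using TensorProduct.induction_on with
  | zero => simp
  | tmul b c =>
      simp only [TensorProduct.map_tmul, LinearMap.mulRight_apply, LinearMap.id_coe, id_eq,
        toKron_tmul]
      rw [← Matrix.mul_kronecker_mul, mul_one]
  | add x y hx hy => simp [map_add, hx, hy, add_mul]

lemma toKron_opLeft (a : M n) (d : M n ⊗[ℂ] M n) :
    toKron (TensorProduct.map (LinearMap.mulRight ℂ a) LinearMap.id d)
      = toKron d * (a ⊗ₖ (1 : M n)) := by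
  induction d using TensorProduct.induction_on with
  | zero => simp
  | tmul b c =>
      simp only [TensorProduct.map_tmul, LinearMap.mulRight_apply, LinearMap.id_coe, id_eq,
        toKron_tmul]
      rw [← Matrix.mul_kronecker_mul, mul_one]
  | add x y hx hy => simp [map_add, hx, hy, add_mul]

lemma toKron_opRight (a : M n) (d : M n ⊗[ℂ] M n) :
    toKron (TensorProduct.map LinearMap.id (LinearMap.mulLeft ℂ a) d)
      = ((1 : M n) ⊗ₖ a) * toKron d := by
  induction d using TensorProduct.induction_on with
  | zero => simp
  | tmul b c =>
      simp only [TensorProduct.map_tmul, LinearMap.mulLeft_apply, LinearMap.id_coe, id_eq,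
        toKron_tmul]
      rw [← Matrix.mul_kronecker_mul, one_mul]
  | add x y hx hy => simp [map_add, hx, hy, mul_add]

lemma mul'_apply_toKron (d : M n ⊗[ℂ] M n) (i l : Fin n) :
    LinearMap.mul' ℂ (M n) d i l = ∑ j, toKron d (i, j) (j, l) := by
  induction d using TensorProduct.induction_on with
  | zero => simp
  | tmul a b => simp [LinearMap.mul'_apply, Matrix.mul_apply]
  | add x y hx hy =>
      simp [map_add, hx, hy, Matrix.add_apply, Finset.sum_add_distrib]


lemma entry_L1 (D : K n) (s t i k j l : Fin n) :
    (((single s t (1:ℂ)) ⊗ₖ (1 : M n)) * D) (i,k) (j,l)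
      = if i = s then D (t,k) (j,l) else 0 := by
  rw [Matrix.mul_apply, Fintype.sum_prod_type]
  simp [single, one_apply, ite_and, Finset.sum_ite_eq, Finset.sum_ite_eq',
    eq_comm]

lemma entry_R1 (D : K n) (s t i k j l : Fin n) :
    (D * ((1 : M n) ⊗ₖ (single s t (1:ℂ)))) (i,k) (j,l)
      = if l = t then D (i,k) (j,s) else 0 := by
  rw [Matrix.mul_apply, Fintype.sum_prod_type]
  simp [single, one_apply, ite_and, Finset.sum_ite_eq, Finset.sum_ite_eq',
    eq_comm]

lemma entry_L2 (D : K n) (s t i k j l : Fin n) :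
    (D * ((single s t (1:ℂ)) ⊗ₖ (1 : M n))) (i,k) (j,l)
      = if j = t then D (i,k) (s,l) else 0 := by
  rw [Matrix.mul_apply, Fintype.sum_prod_type]
  simp [single, one_apply, ite_and, Finset.sum_ite_eq, Finset.sum_ite_eq',
    eq_comm]

lemma entry_R2 (D : K n) (s t i k j l : Fin n) :
    (((1 : M n) ⊗ₖ (single s t (1:ℂ))) * D) (i,k) (j,l)
      = if k = s then D (i,t) (j,l) else 0 := by
  rw [Matrix.mul_apply, Fintype.sum_prod_type]
  simp [single, one_apply, ite_and, Finset.sum_ite_eq, Finset.sum_ite_eq',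
    eq_comm]


lemma toKron_canonical (i k j l : Fin n) :
    toKron (Matrix.canonicalDiagonal n) (i,k) (j,l)
      = if l = i ∧ k = j then (n : ℂ)⁻¹ else 0 := by
  rw [Matrix.canonicalDiagonal, _root_.map_smul]
  rw [map_sum]
  simp only [map_sum, toKron_tmul, stdBasisMatrix_kron]
  simp only [Matrix.smul_apply, Matrix.sum_apply, smul_eq_mul]
  rw [Finset.sum_comm]
  simp [single, Prod.ext_iff, ite_and, Finset.sum_ite_eq, Finset.sum_ite_eq', eq_comm]
  aesop

lemma uniq (hn : 0 < n) (d : M n ⊗[ℂ] M n)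
    (h1 : Matrix.IsDiagonalTensor d) (h2 : Matrix.IsOpDiagonalTensor d) :
    d = Matrix.canonicalDiagonal n := by
  apply toKron_injective
  set D := toKron d with hD
  have H1 : ∀ s t : Fin n, ((single s t (1:ℂ)) ⊗ₖ (1:M n)) * D
      = D * ((1:M n) ⊗ₖ (single s t (1:ℂ))) := by
    intro s t
    rw [hD, ← toKron_mulLeft, ← toKron_mulRight, h1.1]
  have H2 : ∀ s t : Fin n, D * ((single s t (1:ℂ)) ⊗ₖ (1:M n))
      = ((1:M n) ⊗ₖ (single s t (1:ℂ))) * D := by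
    intro s t
    rw [hD, ← toKron_opLeft, ← toKron_opRight, h2.1]
  have A1 : ∀ (t i k j l : Fin n), D (t,k) (j,l) = if l = t then D (i,k) (j,i) else 0 := by
    intro t i k j l
    have h := congrFun (congrFun (congrArg (fun (X : K n) => (X : Fin n × Fin n → Fin n × Fin n → ℂ)) (H1 i t)) (i,k)) (j,l)
    simp only at h
    rw [entry_L1, entry_R1] at h
    simpa using h
  have A2 : ∀ (i k j l m : Fin n), D (i,k) (j,l) = if k = j then D (i,m) (m,l) else 0 := by
    intro i k j l m
    have h := congrFun (congrFun (congrArg (fun (X : K n) => (X : Fin n × Fin n → Fin n × Fin n → ℂ)) (H2 j m)) (i,k)) (m,l)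
    simp only at h
    rw [entry_L2, entry_R2] at h
    simpa using h
  set z : Fin n := ⟨0, hn⟩ with hz
  set lam : ℂ := D (z,z) (z,z) with hlam
  have key : ∀ i k j l : Fin n, D (i,k) (j,l) = if l = i ∧ k = j then lam else 0 := by
    intro i k j l
    rw [A1 i z k j l]
    by_cases hl : l = i
    · rw [if_pos hl, A2 z k j z z]
      by_cases hk : k = j
      · simp [hl, hk, hlam]
      · simp [hl, hk]
    · simp [hl]
  have hone : (1 : ℂ) = (n : ℂ) * lam := by
    have h1' := congrFun (congrFun (congrArg (fun (X : M n) => (X : Fin n → Fin n → ℂ)) h1.2) z) z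
    rw [mul'_apply_toKron] at h1'
    rw [Matrix.one_apply_eq] at h1'
    rw [← hD] at h1'
    have hterm : ∀ j : Fin n, D (z,j) (j,z) = lam := fun j => by rw [key]; simp
    rw [← h1', show (∑ j : Fin n, D (z,j) (j,z)) = ∑ _j : Fin n, lam from
      Finset.sum_congr rfl fun j _ => hterm j]
    simp [Finset.sum_const, mul_comm]
  have hnne : (n : ℂ) ≠ 0 := Nat.cast_ne_zero.mpr hn.ne'
  have hlamval : lam = (n : ℂ)⁻¹ := by
    field_simp
    linear_combination -hone
  ext ⟨i,k⟩ ⟨j,l⟩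
  rw [key i k j l, toKron_canonical, hlamval]


end Prop32Aux

open Prop32Aux in
/-- **Proposition 3.2.** If `𝒢` is a finite subgroup of `GL_n(ℂ)` spanning `M_n(ℂ)`,
then `(1/|𝒢|) ∑_{g ∈ 𝒢} g ⊗ g⁻¹` equals the canonical diagonal
`d₀ = (1/n) ∑_{i,j} e_{ij} ⊗ e_{ji}`; moreover `d₀` is the unique element of
`M_n(ℂ) ⊗ M_n(ℂ)` which is simultaneously a diagonal for `M_n(ℂ)` and for the
opposite algebra `M_n(ℂ)^{op}`. -/
theorem groupAverage_eq_canonicalDiagonal_and_unique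
    (n : ℕ) (hn : 0 < n) (G : Subgroup (GL (Fin n) ℂ)) [Fintype G]
    (hspan : Submodule.span ℂ
        ((fun g : GL (Fin n) ℂ => (g : Matrix (Fin n) (Fin n) ℂ)) '' (G : Set (GL (Fin n) ℂ)))
      = ⊤) :
    ((Fintype.card G : ℂ))⁻¹ • (∑ g : G,
        ((g : GL (Fin n) ℂ) : Matrix (Fin n) (Fin n) ℂ)
          ⊗ₜ[ℂ] (((g⁻¹ : G) : GL (Fin n) ℂ) : Matrix (Fin n) (Fin n) ℂ))
      = Matrix.canonicalDiagonal n ∧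
    ∀ d : Matrix (Fin n) (Fin n) ℂ ⊗[ℂ] Matrix (Fin n) (Fin n) ℂ,
      Matrix.IsDiagonalTensor d → Matrix.IsOpDiagonalTensor d →
        d = Matrix.canonicalDiagonal n := by
  refine ⟨?_, fun d h1 h2 => Prop32Aux.uniq hn d h1 h2⟩
  -- notation
  set mat : G → M n := fun g => ((g : GL (Fin n) ℂ) : M n) with hmat
  have matmul : ∀ g h : G, mat (g * h) = mat g * mat h := fun g h => rfl
  have matone : mat 1 = 1 := rfl
  set c : ℂ := ((Fintype.card G : ℂ))⁻¹ with hc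
  set dG : M n ⊗[ℂ] M n := c • (∑ g : G, mat g ⊗ₜ[ℂ] mat g⁻¹) with hdG
  have hcard : (Fintype.card G : ℂ) ≠ 0 :=
    Nat.cast_ne_zero.mpr Fintype.card_ne_zero
  -- the two sum-reindexing identities
  have sum1 : ∀ h : G, (∑ g : G, (mat h * mat g) ⊗ₜ[ℂ] mat g⁻¹)
      = ∑ g : G, mat g ⊗ₜ[ℂ] (mat g⁻¹ * mat h) := by
    intro h
    rw [← Equiv.sum_comp (Equiv.mulLeft h)
      (fun g : G => mat g ⊗ₜ[ℂ] (mat g⁻¹ * mat h))]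
    refine Finset.sum_congr rfl fun g _ => ?_
    simp only [Equiv.coe_mulLeft]
    rw [matmul, ← matmul, ← matmul]
    congr 2
    group
  have sum2 : ∀ h : G, (∑ g : G, (mat g * mat h) ⊗ₜ[ℂ] mat g⁻¹)
      = ∑ g : G, mat g ⊗ₜ[ℂ] (mat h * mat g⁻¹) := by
    intro h
    rw [← Equiv.sum_comp (Equiv.mulRight h)
      (fun g : G => mat g ⊗ₜ[ℂ] (mat h * mat g⁻¹))]
    refine Finset.sum_congr rfl fun g _ => ?_
    simp only [Equiv.coe_mulRight]
    rw [matmul, ← matmul, ← matmul]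
    congr 2
    group
  -- linearity helpers
  have mulLeft_lin_add : ∀ a b : M n, LinearMap.mulLeft ℂ (a + b)
      = LinearMap.mulLeft ℂ a + LinearMap.mulLeft ℂ b :=
    fun a b => LinearMap.ext fun x => add_mul a b x
  have mulLeft_lin_smul : ∀ (r : ℂ) (a : M n), LinearMap.mulLeft ℂ (r • a)
      = r • LinearMap.mulLeft ℂ a :=
    fun r a => LinearMap.ext fun x => smul_mul_assoc r a x
  have mulRight_lin_add : ∀ a b : M n, LinearMap.mulRight ℂ (a + b)
      = LinearMap.mulRight ℂ a + LinearMap.mulRight ℂ b :=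
    fun a b => LinearMap.ext fun x => mul_add x a b
  have mulRight_lin_smul : ∀ (r : ℂ) (a : M n), LinearMap.mulRight ℂ (r • a)
      = r • LinearMap.mulRight ℂ a :=
    fun r a => LinearMap.ext fun x => mul_smul_comm r x a
  -- the diagonal property of dG
  have prop1 : ∀ a : M n,
      TensorProduct.map (LinearMap.mulLeft ℂ a) LinearMap.id dG
        = TensorProduct.map LinearMap.id (LinearMap.mulRight ℂ a) dG := by
    set Φ : M n →ₗ[ℂ] M n ⊗[ℂ] M n :=
      { toFun := fun a => TensorProduct.map (LinearMap.mulLeft ℂ a) LinearMap.id dG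
            - TensorProduct.map LinearMap.id (LinearMap.mulRight ℂ a) dG
        map_add' := fun a b => by
          rw [mulLeft_lin_add, mulRight_lin_add, TensorProduct.map_add_left,
            TensorProduct.map_add_right]
          simp only [LinearMap.add_apply]
          abel
        map_smul' := fun r a => by
          rw [mulLeft_lin_smul, mulRight_lin_smul, TensorProduct.map_smul_left,
            TensorProduct.map_smul_right]
          simp only [LinearMap.smul_apply, RingHom.id_apply, smul_sub] } with hΦ
    have hker : LinearMap.ker Φ = ⊤ := by
      rw [← top_le_iff, ← hspan, Submodule.span_le]
      rintro _ ⟨g, hg, rfl⟩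
      simp only [SetLike.mem_coe, LinearMap.mem_ker, hΦ, LinearMap.coe_mk, AddHom.coe_mk,
        sub_eq_zero]
      have hg' : ((g : M n)) = mat ⟨g, hg⟩ := rfl
      rw [hg', hdG, _root_.map_smul, _root_.map_smul, map_sum, map_sum]
      congr 1
      simp only [TensorProduct.map_tmul, LinearMap.mulLeft_apply, LinearMap.mulRight_apply,
        LinearMap.id_coe, id_eq]
      exact sum1 ⟨g, hg⟩
    intro a
    have : Φ a = 0 := LinearMap.mem_ker.mp (hker ▸ Submodule.mem_top)
    simpa [hΦ, sub_eq_zero] using this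
  have prop2 : ∀ a : M n,
      TensorProduct.map (LinearMap.mulRight ℂ a) LinearMap.id dG
        = TensorProduct.map LinearMap.id (LinearMap.mulLeft ℂ a) dG := by
    set Φ : M n →ₗ[ℂ] M n ⊗[ℂ] M n :=
      { toFun := fun a => TensorProduct.map (LinearMap.mulRight ℂ a) LinearMap.id dG
            - TensorProduct.map LinearMap.id (LinearMap.mulLeft ℂ a) dG
        map_add' := fun a b => by
          rw [mulLeft_lin_add, mulRight_lin_add, TensorProduct.map_add_left,
            TensorProduct.map_add_right]
          simp only [LinearMap.add_apply]
          abel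
        map_smul' := fun r a => by
          rw [mulLeft_lin_smul, mulRight_lin_smul, TensorProduct.map_smul_left,
            TensorProduct.map_smul_right]
          simp only [LinearMap.smul_apply, RingHom.id_apply, smul_sub] } with hΦ
    have hker : LinearMap.ker Φ = ⊤ := by
      rw [← top_le_iff, ← hspan, Submodule.span_le]
      rintro _ ⟨g, hg, rfl⟩
      simp only [SetLike.mem_coe, LinearMap.mem_ker, hΦ, LinearMap.coe_mk, AddHom.coe_mk,
        sub_eq_zero]
      have hg' : ((g : M n)) = mat ⟨g, hg⟩ := rfl
      rw [hg', hdG, _root_.map_smul, _root_.map_smul, map_sum, map_sum]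
      congr 1
      simp only [TensorProduct.map_tmul, LinearMap.mulLeft_apply, LinearMap.mulRight_apply,
        LinearMap.id_coe, id_eq]
      exact sum2 ⟨g, hg⟩
    intro a
    have : Φ a = 0 := LinearMap.mem_ker.mp (hker ▸ Submodule.mem_top)
    simpa [hΦ, sub_eq_zero] using this
  have norm1 : LinearMap.mul' ℂ (M n) dG = 1 := by
    rw [hdG, _root_.map_smul, map_sum]
    have : ∀ g : G, LinearMap.mul' ℂ (M n) (mat g ⊗ₜ[ℂ] mat g⁻¹) = 1 := by
      intro g
      rw [LinearMap.mul'_apply, ← matmul, mul_inv_cancel, matone]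
    rw [Finset.sum_congr rfl fun g _ => this g]
    simp [Finset.sum_const, ← Nat.cast_smul_eq_nsmul ℂ, smul_smul, hc,
      inv_mul_cancel₀ hcard]
  have norm2 : LinearMap.mul' ℂ (M n) (TensorProduct.comm ℂ _ _ dG) = 1 := by
    show LinearMap.mul' ℂ (M n) ((TensorProduct.comm ℂ (M n) (M n)).toLinearMap dG) = 1
    rw [hdG, _root_.map_smul, _root_.map_smul, map_sum, map_sum]
    have : ∀ g : G, LinearMap.mul' ℂ (M n)
        ((TensorProduct.comm ℂ (M n) (M n)).toLinearMap (mat g ⊗ₜ[ℂ] mat g⁻¹)) = 1 := by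
      intro g
      show LinearMap.mul' ℂ (M n) (TensorProduct.comm ℂ (M n) (M n) (mat g ⊗ₜ[ℂ] mat g⁻¹)) = 1
      rw [TensorProduct.comm_tmul, LinearMap.mul'_apply, ← matmul, inv_mul_cancel, matone]
    rw [Finset.sum_congr rfl fun g _ => this g]
    simp [Finset.sum_const, ← Nat.cast_smul_eq_nsmul ℂ, smul_smul, hc,
      inv_mul_cancel₀ hcard]
  exact Prop32Aux.uniq hn dG ⟨prop1, norm1⟩ ⟨prop2, norm2⟩


end
end

section
/- Let X and Y be Banach spaces and let Z = X⊗_α Y be a tight tensor product of X and Y. If X and Y both have property (𝔸), then Z has property (𝔸). -/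
open scoped TensorProduct
open Filter Topology

noncomputable section

universe u

/-- The finite-rank operators from `X` to `Y`. -/
def finRankOps (X Y : Type*) [NormedAddCommGroup X] [NormedSpace ℂ X]
    [NormedAddCommGroup Y] [NormedSpace ℂ Y] : Set (X →L[ℂ] Y) :=
  {T | FiniteDimensional ℂ (LinearMap.range (T : X →ₗ[ℂ] Y))}

/-- The approximable operators from `X` to `Y`: the closure in operator norm of the
finite-rank operators. -/
def approxOps (X Y : Type*) [NormedAddCommGroup X] [NormedSpace ℂ X]
    [NormedAddCommGroup Y] [NormedSpace ℂ Y] : Set (X →L[ℂ] Y) :=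
  closure (finRankOps X Y)

section TensorSection

variable (X Y Z : Type*) [NormedAddCommGroup X] [NormedSpace ℂ X]
  [NormedAddCommGroup Y] [NormedSpace ℂ Y] [NormedAddCommGroup Z] [NormedSpace ℂ Z]

/-- A realization of the Banach space `Z` as the completion `X ⊗_α Y` of the algebraic
tensor product `X ⊗ Y` with respect to a crossnorm `α` (the norm induced from `Z`). -/
structure TensorCompletion where
  ι : X ⊗[ℂ] Y →ₗ[ℂ] Z
  injective : Function.Injective ι
  denseRange : DenseRange ι
  cross : ∀ (x : X) (y : Y), ‖ι (x ⊗ₜ[ℂ] y)‖ = ‖x‖ * ‖y‖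

variable {X Y Z}

/-- `X ⊗_α Y` is a *tight* tensor product if (i) there is `K > 0` such that for all
approximable `S`, `T` the operator `S ⊗ T` extends to a bounded operator on `X ⊗_α Y`
of norm at most `K‖S‖‖T‖`, and (ii) the span of these operators `S ⊗ T` is dense in
`𝓕(X ⊗_α Y)`. -/
structure TensorCompletion.IsTight (tc : TensorCompletion X Y Z) : Prop where
  bound : ∃ K > (0 : ℝ), ∀ S ∈ approxOps X X, ∀ T ∈ approxOps Y Y,
    ∃ R : Z →L[ℂ] Z, (∀ (x : X) (y : Y), R (tc.ι (x ⊗ₜ[ℂ] y)) = tc.ι (S x ⊗ₜ[ℂ] T y)) ∧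
      ‖R‖ ≤ K * ‖S‖ * ‖T‖
  dense : closure (Submodule.span ℂ
      {R : Z →L[ℂ] Z | ∃ S ∈ approxOps X X, ∃ T ∈ approxOps Y Y,
        ∀ (x : X) (y : Y), R (tc.ι (x ⊗ₜ[ℂ] y)) = tc.ι (S x ⊗ₜ[ℂ] T y)} : Set (Z →L[ℂ] Z))
    = approxOps Z Z

end TensorSection

/-- A Banach space `X` has property (𝔸) if there is a net of finite biorthogonal systems
`(x_{i,λ}, x*_{j,λ})`, with associated algebra homomorphisms
`E_λ : M_{n_λ}(ℂ) → 𝓕(X)`, `E_λ(a) = ∑ a i j • x_{i,λ} ⊗ x*_{j,λ}`, such that with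
`P_λ = E_λ(1)`: (i) `P_λ → 1_X` strongly; (ii) `P_λ^a → 1_{X*}` strongly; (iii) there
are irreducible finite matrix groups `𝒢_λ ≤ GL_{n_λ}(ℂ)` with
`sup {‖E_λ(g)‖ : g ∈ 𝒢_λ, λ} < ∞`. -/
def HasPropertyA (X : Type*) [NormedAddCommGroup X] [NormedSpace ℂ X] : Prop :=
  ∃ (Λ : Type) (_ : Nonempty Λ) (_ : Preorder Λ) (_ : IsDirected Λ (· ≤ ·))
    (n : Λ → ℕ) (x : (l : Λ) → Fin (n l) → X) (x' : (l : Λ) → Fin (n l) → (X →L[ℂ] ℂ)),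
    (∀ l i j, x' l j (x l i) = if i = j then 1 else 0) ∧
    (let E : (l : Λ) → Matrix (Fin (n l)) (Fin (n l)) ℂ → (X →L[ℂ] X) :=
        fun l a => ∑ i, ∑ j, a i j • (x' l j).smulRight (x l i)
     (∀ v : X, Tendsto (fun l => E l 1 v) atTop (nhds v)) ∧
     (∀ f : X →L[ℂ] ℂ, Tendsto (fun l => f.comp (E l 1)) atTop (nhds f)) ∧
     (∃ (G : (l : Λ) → Subgroup (GL (Fin (n l)) ℂ)) (C : ℝ),
        (∀ l, ((G l : Set (GL (Fin (n l)) ℂ))).Finite) ∧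
        (∀ l, Submodule.span ℂ ((fun g : GL (Fin (n l)) ℂ => (g : Matrix (Fin (n l)) (Fin (n l)) ℂ)) '' (G l)) = ⊤) ∧
        (∀ l, ∀ g ∈ G l, ‖E l (g : Matrix (Fin (n l)) (Fin (n l)) ℂ)‖ ≤ C)))

/-! ### Auxiliary lemmas -/

section Aux

open scoped Kronecker

variable {X₀ Y₀ : Type*} [NormedAddCommGroup X₀] [NormedSpace ℂ X₀]
  [NormedAddCommGroup Y₀] [NormedSpace ℂ Y₀]

lemma smulRight_mem_finRankOps (g : X₀ →L[ℂ] ℂ) (u : Y₀) :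
    g.smulRight u ∈ finRankOps X₀ Y₀ := by
  have hle : LinearMap.range ((g.smulRight u : X₀ →L[ℂ] Y₀) : X₀ →ₗ[ℂ] Y₀)
      ≤ Submodule.span ℂ {u} := by
    rintro _ ⟨x, rfl⟩
    exact Submodule.smul_mem _ _ (Submodule.mem_span_singleton_self u)
  exact Submodule.finiteDimensional_of_le hle

lemma finRankOps_add {S T : X₀ →L[ℂ] Y₀} (hS : S ∈ finRankOps X₀ Y₀)
    (hT : T ∈ finRankOps X₀ Y₀) : S + T ∈ finRankOps X₀ Y₀ := by
  have hle : LinearMap.range ((S + T : X₀ →L[ℂ] Y₀) : X₀ →ₗ[ℂ] Y₀) ≤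
      LinearMap.range ((S : X₀ →L[ℂ] Y₀) : X₀ →ₗ[ℂ] Y₀)
        ⊔ LinearMap.range ((T : X₀ →L[ℂ] Y₀) : X₀ →ₗ[ℂ] Y₀) := by
    rintro _ ⟨x, rfl⟩
    exact Submodule.add_mem_sup (LinearMap.mem_range_self _ x) (LinearMap.mem_range_self _ x)
  haveI : FiniteDimensional ℂ ↥(LinearMap.range ((S : X₀ →L[ℂ] Y₀) : X₀ →ₗ[ℂ] Y₀)) := hS
  haveI : FiniteDimensional ℂ ↥(LinearMap.range ((T : X₀ →L[ℂ] Y₀) : X₀ →ₗ[ℂ] Y₀)) := hT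
  haveI : FiniteDimensional ℂ ↥(LinearMap.range ((S : X₀ →L[ℂ] Y₀) : X₀ →ₗ[ℂ] Y₀) ⊔
      LinearMap.range ((T : X₀ →L[ℂ] Y₀) : X₀ →ₗ[ℂ] Y₀)) := Submodule.finiteDimensional_sup _ _
  exact Submodule.finiteDimensional_of_le hle

lemma finRankOps_neg {S : X₀ →L[ℂ] Y₀} (hS : S ∈ finRankOps X₀ Y₀) :
    -S ∈ finRankOps X₀ Y₀ := by
  have hle : LinearMap.range ((-S : X₀ →L[ℂ] Y₀) : X₀ →ₗ[ℂ] Y₀) ≤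
      LinearMap.range ((S : X₀ →L[ℂ] Y₀) : X₀ →ₗ[ℂ] Y₀) := by
    rintro _ ⟨x, rfl⟩
    exact ⟨-x, by simp⟩
  haveI : FiniteDimensional ℂ ↥(LinearMap.range ((S : X₀ →L[ℂ] Y₀) : X₀ →ₗ[ℂ] Y₀)) := hS
  exact Submodule.finiteDimensional_of_le hle

lemma finRankOps_comp_right {S : X₀ →L[ℂ] Y₀} (hS : S ∈ finRankOps X₀ Y₀) (P : X₀ →L[ℂ] X₀) :
    S.comp P ∈ finRankOps X₀ Y₀ := by
  have hle : LinearMap.range ((S.comp P : X₀ →L[ℂ] Y₀) : X₀ →ₗ[ℂ] Y₀) ≤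
      LinearMap.range ((S : X₀ →L[ℂ] Y₀) : X₀ →ₗ[ℂ] Y₀) := by
    rintro _ ⟨w, rfl⟩
    exact ⟨P w, rfl⟩
  haveI : FiniteDimensional ℂ ↥(LinearMap.range ((S : X₀ →L[ℂ] Y₀) : X₀ →ₗ[ℂ] Y₀)) := hS
  exact Submodule.finiteDimensional_of_le hle

lemma approxOps_comp_right {S : X₀ →L[ℂ] Y₀} (hS : S ∈ approxOps X₀ Y₀) (P : X₀ →L[ℂ] X₀) :
    S.comp P ∈ approxOps X₀ Y₀ := by
  rw [approxOps, mem_closure_iff_seq_limit] at hS ⊢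
  obtain ⟨u, hu, hlim⟩ := hS
  refine ⟨fun n => (u n).comp P, fun n => finRankOps_comp_right (hu n) P, ?_⟩
  rw [tendsto_iff_norm_sub_tendsto_zero] at hlim ⊢
  refine squeeze_zero_norm (fun n => ?_) (by simpa using hlim.mul_const ‖P‖)
  have h : (u n).comp P - S.comp P = (u n - S).comp P := by ext; simp
  rw [norm_norm, h]
  exact ((u n - S).opNorm_comp_le P)

lemma approxOps_sub {S T : X₀ →L[ℂ] Y₀} (hS : S ∈ approxOps X₀ Y₀)
    (hT : T ∈ approxOps X₀ Y₀) : S - T ∈ approxOps X₀ Y₀ := by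
  rw [approxOps, mem_closure_iff_seq_limit] at hS hT ⊢
  obtain ⟨u, hu, hulim⟩ := hS
  obtain ⟨v, hv, hvlim⟩ := hT
  exact ⟨fun n => u n - v n,
    fun n => by simpa [sub_eq_add_neg] using finRankOps_add (hu n) (finRankOps_neg (hv n)),
    hulim.sub hvlim⟩

/-- Finite-rank operators are finite sums of rank-one operators. -/
lemma finRankOps_decomp {S : X₀ →L[ℂ] Y₀} (hS : S ∈ finRankOps X₀ Y₀) :
    ∃ (k : ℕ) (g : Fin k → (X₀ →L[ℂ] ℂ)) (u : Fin k → Y₀),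
      S = ∑ i, (g i).smulRight (u i) := by
  haveI hfd : FiniteDimensional ℂ ↥(LinearMap.range ((S : X₀ →L[ℂ] Y₀) : X₀ →ₗ[ℂ] Y₀)) := hS
  set V := LinearMap.range ((S : X₀ →L[ℂ] Y₀) : X₀ →ₗ[ℂ] Y₀)
  let b := Module.finBasis ℂ V
  set k := Module.finrank ℂ V
  let Sc : X₀ →L[ℂ] V := S.codRestrict V (fun x => LinearMap.mem_range_self _ x)
  let g : Fin k → (X₀ →L[ℂ] ℂ) := fun i =>
    (LinearMap.toContinuousLinearMap (Module.Basis.coord b i : V →ₗ[ℂ] ℂ)).comp Sc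
  refine ⟨k, g, fun i => (b i : Y₀), ?_⟩
  ext x
  have h1 : (∑ i, (g i).smulRight ((b i : V) : Y₀)) x
      = ∑ i, (b.repr (Sc x)) i • ((b i : V) : Y₀) := by
    simp [g]
  rw [h1]
  have h2 : ∑ i, (b.repr (Sc x)) i • ((b i : V) : Y₀)
      = ((∑ i, (b.repr (Sc x)) i • (b i) : V) : Y₀) := by
    push_cast [Submodule.coe_sum]
    rfl
  rw [h2, Module.Basis.sum_repr b (Sc x)]
  rfl

variable {ι : Type} [Nonempty ι] [Preorder ι] [IsDirected ι (· ≤ ·)]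

omit [Nonempty ι] [IsDirected ι (· ≤ ·)] in
lemma tendsto_on_closure {F : Type*} [NormedAddCommGroup F] [NormedSpace ℂ F]
    (A : ι → F → F) (B : ℝ) (hB : 0 ≤ B)
    (hLip : ∀ t v w, ‖A t v - A t w‖ ≤ B * ‖v - w‖)
    {s : Set F} (h : ∀ v ∈ s, Tendsto (fun t => A t v) atTop (𝓝 v)) :
    ∀ v ∈ closure s, Tendsto (fun t => A t v) atTop (𝓝 v) := by
  intro v hv
  rw [Metric.tendsto_nhds]
  intro ε hε
  obtain ⟨w, hw, hdist⟩ := Metric.mem_closure_iff.mp hv (ε / (2 * (B + 1))) (by positivity)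
  have h2 := (Metric.tendsto_nhds.mp (h w hw)) (ε / 2) (by positivity)
  filter_upwards [h2] with t ht
  have e1 : dist (A t v) v ≤ dist (A t v) (A t w) + dist (A t w) w + dist w v :=
    dist_triangle4 _ _ _ _
  have e2 : dist (A t v) (A t w) ≤ B * dist v w := by
    rw [dist_eq_norm, dist_eq_norm]; exact hLip t v w
  have e3 : dist w v = dist v w := dist_comm _ _
  have e4 : dist v w < ε / (2 * (B + 1)) := hdist
  have e5 : B * dist v w + dist v w ≤ (B + 1) * (ε / (2 * (B + 1))) := by
    have : (B + 1) * dist v w ≤ (B + 1) * (ε / (2 * (B + 1))) :=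
      mul_le_mul_of_nonneg_left (le_of_lt e4) (by linarith)
    linarith
  have hfin : (B + 1) * (ε / (2 * (B + 1))) = ε / 2 := by
    field_simp
  calc dist (A t v) v ≤ B * dist v w + dist (A t w) w + dist v w := by
        rw [e3] at e1; linarith
    _ < (B + 1) * (ε / (2 * (B + 1))) + ε / 2 := by linarith
    _ = ε := by rw [hfin]; ring

lemma approx_comp_tendsto (Q : ι → X₀ →L[ℂ] X₀) (C : ℝ) (hC : ∀ t, ‖Q t‖ ≤ C)
    (h2 : ∀ f : X₀ →L[ℂ] ℂ, Tendsto (fun t => f.comp (Q t)) atTop (𝓝 f)) :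
    ∀ S ∈ approxOps X₀ X₀, Tendsto (fun t => S.comp (Q t)) atTop (𝓝 S) := by
  have hC0 : 0 ≤ C := le_trans (norm_nonneg _) (hC (Classical.arbitrary ι))
  have hfin : ∀ S ∈ finRankOps X₀ X₀, Tendsto (fun t => S.comp (Q t)) atTop (𝓝 S) := by
    intro S hS
    obtain ⟨k, g, u, rfl⟩ := finRankOps_decomp hS
    have hrw : ∀ t, (∑ i, (g i).smulRight (u i)).comp (Q t)
        = ∑ i, ((g i).comp (Q t)).smulRight (u i) := by
      intro t; ext x; simp
    simp_rw [hrw]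
    apply tendsto_finset_sum
    intro i _
    have hi := h2 (g i)
    rw [tendsto_iff_norm_sub_tendsto_zero] at hi ⊢
    refine squeeze_zero_norm (fun t => ?_) (by simpa using hi.mul_const ‖u i‖)
    rw [norm_norm]
    have hsub : ((g i).comp (Q t)).smulRight (u i) - (g i).smulRight (u i)
        = ((g i).comp (Q t) - g i).smulRight (u i) := by ext; simp [sub_smul]
    rw [hsub, ContinuousLinearMap.norm_smulRight_apply]
  intro S hS
  refine tendsto_on_closure (fun t S => S.comp (Q t)) C hC0 (fun t v w => ?_) hfin S hS
  have hsub : v.comp (Q t) - w.comp (Q t) = (v - w).comp (Q t) := by ext; simp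
  rw [hsub]
  calc ‖(v - w).comp (Q t)‖ ≤ ‖v - w‖ * ‖Q t‖ := ContinuousLinearMap.opNorm_comp_le _ _
    _ ≤ ‖v - w‖ * C := mul_le_mul_of_nonneg_left (hC t) (norm_nonneg _)
    _ = C * ‖v - w‖ := mul_comm _ _

lemma stdBasis_kron {n m : Type*} [Fintype n] [Fintype m] [DecidableEq n] [DecidableEq m]
    (i j : n) (k l : m) :
    Matrix.kroneckerMap (· * ·) (Matrix.single i j (1:ℂ)) (Matrix.single k l (1:ℂ))
      = Matrix.single (i,k) (j,l) (1:ℂ) := by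
  ext ⟨p,q⟩ ⟨r,s⟩
  simp only [Matrix.kroneckerMap_apply, Matrix.single, Matrix.of_apply, Prod.mk.injEq]
  by_cases h1 : i = p <;> by_cases h2 : j = r <;> by_cases h3 : k = q <;> by_cases h4 : l = s <;>
    simp [h1, h2, h3, h4]

lemma span_kronecker_top {n m : Type*} [Fintype n] [Fintype m] [DecidableEq n] [DecidableEq m]
    (S : Set (Matrix n n ℂ)) (T : Set (Matrix m m ℂ))
    (hS : Submodule.span ℂ S = ⊤) (hT : Submodule.span ℂ T = ⊤) :
    Submodule.span ℂ (Set.image2 (fun a b => Matrix.kroneckerMap (· * ·) a b) S T) = ⊤ := by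
  have happ : ∀ (a : Matrix n n ℂ) (b : Matrix m m ℂ),
      (Matrix.kroneckerMapBilinear (LinearMap.mul ℂ ℂ) a) b = Matrix.kroneckerMap (· * ·) a b := by
    intro a b; rfl
  have key : Submodule.map₂ (Matrix.kroneckerMapBilinear (LinearMap.mul ℂ ℂ))
      (⊤ : Submodule ℂ (Matrix n n ℂ)) (⊤ : Submodule ℂ (Matrix m m ℂ)) = ⊤ := by
    rw [eq_top_iff]
    rintro c -
    rw [Matrix.matrix_eq_sum_single c]
    refine Submodule.sum_mem _ fun pq _ => Submodule.sum_mem _ fun rs _ => ?_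
    obtain ⟨p, q⟩ := pq
    obtain ⟨r, s⟩ := rs
    have h : Matrix.single (p,q) (r,s) (c (p,q) (r,s))
        = c (p,q) (r,s) • (Matrix.kroneckerMapBilinear (LinearMap.mul ℂ ℂ)
            (Matrix.single p r (1:ℂ)) (Matrix.single q s (1:ℂ))) := by
      rw [happ, stdBasis_kron, Matrix.smul_single, smul_eq_mul, mul_one]
    rw [h]
    exact Submodule.smul_mem _ _
      (Submodule.apply_mem_map₂ _ Submodule.mem_top Submodule.mem_top)
  have hm := Submodule.map₂_span_span ℂ (Matrix.kroneckerMapBilinear (LinearMap.mul ℂ ℂ)) S T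
  rw [hS, hT, key] at hm
  simp_rw [happ] at hm
  exact hm.symm

variable {Z₀ : Type*} [NormedAddCommGroup Z₀] [NormedSpace ℂ Z₀]

/-- Two operators on `Z` agreeing on elementary tensors agree. -/
lemma TensorCompletion.op_ext (tc : TensorCompletion X₀ Y₀ Z₀) {R₁ R₂ : Z₀ →L[ℂ] Z₀}
    (h : ∀ x y, R₁ (tc.ι (x ⊗ₜ[ℂ] y)) = R₂ (tc.ι (x ⊗ₜ[ℂ] y))) : R₁ = R₂ := by
  have hlin : ((R₁ : Z₀ →ₗ[ℂ] Z₀).comp tc.ι) = ((R₂ : Z₀ →ₗ[ℂ] Z₀).comp tc.ι) :=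
    TensorProduct.ext' h
  have heq : Set.EqOn R₁ R₂ (Set.range tc.ι) := by
    rintro _ ⟨w, rfl⟩
    exact LinearMap.congr_fun hlin w
  have hfun : (R₁ : Z₀ → Z₀) = R₂ :=
    Continuous.ext_on tc.denseRange R₁.continuous R₂.continuous heq
  ext z
  exact congrFun hfun z

end Aux


set_option maxHeartbeats 1000000 in
/-- **Theorem 4.4.** If `Z = X ⊗_α Y` is a tight tensor product of Banach spaces `X` and
`Y` which both have property (𝔸), then `Z` has property (𝔸). -/
theorem hasPropertyA_of_tight
    (X Y Z : Type*) [NormedAddCommGroup X] [NormedSpace ℂ X] [CompleteSpace X]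
    [NormedAddCommGroup Y] [NormedSpace ℂ Y] [CompleteSpace Y]
    [NormedAddCommGroup Z] [NormedSpace ℂ Z] [CompleteSpace Z]
    (tc : TensorCompletion X Y Z) (htight : tc.IsTight)
    (hX : HasPropertyA X) (hY : HasPropertyA Y) : HasPropertyA Z := by
  classical
  obtain ⟨K, hKpos, hbound⟩ := htight.bound
  obtain ⟨Λ, hΛne, hΛpre, hΛdir, n, xv, xf, hbiX, hrestX⟩ := hX
  obtain ⟨M, hMne, hMpre, hMdir, m, yv, yf, hbiY, hrestY⟩ := hY
  haveI := hΛne; letI := hΛpre; haveI := hΛdir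
  haveI := hMne; letI := hMpre; haveI := hMdir
  obtain ⟨hX1, hX2, GX, CX, hGXfin, hGXspan, hGXnorm⟩ := hrestX
  obtain ⟨hY1, hY2, GY, CY, hGYfin, hGYspan, hGYnorm⟩ := hrestY
  let EX : (l : Λ) → Matrix (Fin (n l)) (Fin (n l)) ℂ → (X →L[ℂ] X) :=
    fun l a => ∑ i, ∑ j, a i j • (xf l j).smulRight (xv l i)
  let EY : (l : M) → Matrix (Fin (m l)) (Fin (m l)) ℂ → (Y →L[ℂ] Y) :=
    fun l a => ∑ i, ∑ j, a i j • (yf l j).smulRight (yv l i)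
  have hX1' : ∀ v : X, Tendsto (fun l => EX l 1 v) atTop (𝓝 v) := hX1
  have hX2' : ∀ f : X →L[ℂ] ℂ, Tendsto (fun l => f.comp (EX l 1)) atTop (𝓝 f) := hX2
  have hGXnorm' : ∀ l, ∀ g ∈ GX l, ‖EX l (g : Matrix (Fin (n l)) (Fin (n l)) ℂ)‖ ≤ CX := hGXnorm
  have hY1' : ∀ v : Y, Tendsto (fun l => EY l 1 v) atTop (𝓝 v) := hY1
  have hY2' : ∀ f : Y →L[ℂ] ℂ, Tendsto (fun l => f.comp (EY l 1)) atTop (𝓝 f) := hY2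
  have hGYnorm' : ∀ l, ∀ g ∈ GY l, ‖EY l (g : Matrix (Fin (m l)) (Fin (m l)) ℂ)‖ ≤ CY := hGYnorm
  -- basic facts
  have hzero_fr : (0 : X →L[ℂ] X) ∈ finRankOps X X := by
    have h0 : ((0 : X →L[ℂ] ℂ).smulRight (0 : X)) = 0 := by ext; simp
    rw [← h0]; exact smulRight_mem_finRankOps _ _
  have hsmul_smulRight : ∀ (c : ℂ) (g : X →L[ℂ] ℂ) (u : X),
      c • (g.smulRight u) = (c • g).smulRight u := by
    intro c g u; ext w; simp [smul_smul]
  have hEXfin : ∀ l a, EX l a ∈ finRankOps X X := by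
    intro l a
    refine Finset.sum_induction _ (· ∈ finRankOps X X) (fun _ _ => finRankOps_add) hzero_fr ?_
    intro i _
    refine Finset.sum_induction _ (· ∈ finRankOps X X) (fun _ _ => finRankOps_add) hzero_fr ?_
    intro j _
    rw [hsmul_smulRight]
    exact smulRight_mem_finRankOps _ _
  have hzero_frY : (0 : Y →L[ℂ] Y) ∈ finRankOps Y Y := by
    have h0 : ((0 : Y →L[ℂ] ℂ).smulRight (0 : Y)) = 0 := by ext; simp
    rw [← h0]; exact smulRight_mem_finRankOps _ _
  have hsmul_smulRightY : ∀ (c : ℂ) (g : Y →L[ℂ] ℂ) (u : Y),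
      c • (g.smulRight u) = (c • g).smulRight u := by
    intro c g u; ext w; simp [smul_smul]
  have hEYfin : ∀ l a, EY l a ∈ finRankOps Y Y := by
    intro l a
    refine Finset.sum_induction _ (· ∈ finRankOps Y Y) (fun _ _ => finRankOps_add) hzero_frY ?_
    intro i _
    refine Finset.sum_induction _ (· ∈ finRankOps Y Y) (fun _ _ => finRankOps_add) hzero_frY ?_
    intro j _
    rw [hsmul_smulRightY]
    exact smulRight_mem_finRankOps _ _
  have hPX : ∀ l, ‖EX l 1‖ ≤ CX := by
    intro l
    have := hGXnorm' l 1 (one_mem _)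
    simpa using this
  have hPY : ∀ l, ‖EY l 1‖ ≤ CY := by
    intro l
    have := hGYnorm' l 1 (one_mem _)
    simpa using this
  have hCX0 : 0 ≤ CX := le_trans (norm_nonneg _) (hPX (Classical.arbitrary Λ))
  have hCY0 : 0 ≤ CY := le_trans (norm_nonneg _) (hPY (Classical.arbitrary M))
  have hxne : ∀ l i, xv l i ≠ 0 := by
    intro l i h
    have hb := hbiX l i i
    rw [h] at hb
    simp at hb
  have hyne : ∀ l i, yv l i ≠ 0 := by
    intro l i h
    have hb := hbiY l i i
    rw [h] at hb
    simp at hb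
  -- rank-one operators used to build the functionals on Z
  let S1 : ∀ l, Fin (n l) → (X →L[ℂ] X) := fun l j => (xf l j).smulRight (xv l j)
  let T1 : ∀ l, Fin (m l) → (Y →L[ℂ] Y) := fun l k => (yf l k).smulRight (yv l k)
  have hS1mem : ∀ l j, S1 l j ∈ approxOps X X :=
    fun l j => subset_closure (smulRight_mem_finRankOps _ _)
  have hT1mem : ∀ l k, T1 l k ∈ approxOps Y Y :=
    fun l k => subset_closure (smulRight_mem_finRankOps _ _)
  have hR1 : ∀ (l : Λ) (mm : M) (j : Fin (n l)) (k : Fin (m mm)), ∃ R : Z →L[ℂ] Z,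
      ∀ (u : X) (v : Y), R (tc.ι (u ⊗ₜ[ℂ] v)) = tc.ι ((S1 l j) u ⊗ₜ[ℂ] (T1 mm k) v) := by
    intro l mm j k
    obtain ⟨R, hR, -⟩ := hbound _ (hS1mem l j) _ (hT1mem mm k)
    exact ⟨R, hR⟩
  choose Rjk hRjk using hR1
  have hvne : ∀ (l : Λ) (mm : M) (j : Fin (n l)) (k : Fin (m mm)),
      tc.ι (xv l j ⊗ₜ[ℂ] yv mm k) ≠ 0 := by
    intro l mm j k h
    have hc := tc.cross (xv l j) (yv mm k)
    rw [h, norm_zero] at hc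
    exact mul_ne_zero (norm_ne_zero_iff.mpr (hxne l j)) (norm_ne_zero_iff.mpr (hyne mm k)) hc.symm
  choose gd hgd1 hgd2 using fun (l : Λ) (mm : M) (j : Fin (n l)) (k : Fin (m mm)) =>
    exists_dual_vector ℂ _ (norm_ne_zero_iff.mpr (hvne l mm j k))
  let zf : ∀ (l : Λ) (mm : M), Fin (n l) → Fin (m mm) → (Z →L[ℂ] ℂ) :=
    fun l mm j k =>
      (((‖tc.ι (xv l j ⊗ₜ[ℂ] yv mm k)‖ : ℂ)⁻¹ • (gd l mm j k : Z →L[ℂ] ℂ)).comp (Rjk l mm j k))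
  have hzf : ∀ (l : Λ) (mm : M) (j : Fin (n l)) (k : Fin (m mm)) (u : X) (v : Y),
      zf l mm j k (tc.ι (u ⊗ₜ[ℂ] v)) = xf l j u * yf mm k v := by
    intro l mm j k u v
    have hten : (S1 l j u) ⊗ₜ[ℂ] (T1 mm k v) = (xf l j u * yf mm k v) • (xv l j ⊗ₜ[ℂ] yv mm k) := by
      simp [S1, T1, TensorProduct.smul_tmul', TensorProduct.tmul_smul, smul_smul, mul_comm]
    have hne : (‖tc.ι (xv l j ⊗ₜ[ℂ] yv mm k)‖ : ℂ) ≠ 0 := by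
      exact_mod_cast norm_ne_zero_iff.mpr (hvne l mm j k)
    simp only [zf, ContinuousLinearMap.comp_apply, ContinuousLinearMap.smul_apply]
    rw [hRjk, hten, map_smul, map_smul, hgd2]
    simp only [smul_eq_mul]
    rw [RCLike.ofReal_eq_complex_ofReal]
    field_simp
  -- Kronecker products reindexed to `Fin (n l * m mm)`
  let e : ∀ (l : Λ) (mm : M), (Fin (n l) × Fin (m mm)) ≃ Fin (n l * m mm) :=
    fun _ _ => finProdFinEquiv
  let kronZ : ∀ (l : Λ) (mm : M), Matrix (Fin (n l)) (Fin (n l)) ℂ →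
      Matrix (Fin (m mm)) (Fin (m mm)) ℂ → Matrix (Fin (n l * m mm)) (Fin (n l * m mm)) ℂ :=
    fun l mm a b => Matrix.reindexAlgEquiv ℂ ℂ (e l mm) (Matrix.kroneckerMap (· * ·) a b)
  have hkronZ_apply : ∀ (l : Λ) (mm : M) a b p q, kronZ l mm a b p q
      = a ((e l mm).symm p).1 ((e l mm).symm q).1 * b ((e l mm).symm p).2 ((e l mm).symm q).2 := by
    intro l mm a b p q
    simp [kronZ, Matrix.reindexAlgEquiv_apply, Matrix.reindex_apply, Matrix.submatrix_apply]
  have hkron_one : ∀ (l : Λ) (mm : M), kronZ l mm 1 1 = 1 := by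
    intro l mm
    have h1 : Matrix.kroneckerMap (· * ·) (1 : Matrix (Fin (n l)) (Fin (n l)) ℂ)
        (1 : Matrix (Fin (m mm)) (Fin (m mm)) ℂ) = 1 := Matrix.one_kronecker_one
    simp [kronZ, h1]
  -- the biorthogonal system for Z
  let zz : ∀ (lm : Λ × M), Fin (n lm.1 * m lm.2) → Z :=
    fun lm p => tc.ι (xv lm.1 ((e lm.1 lm.2).symm p).1 ⊗ₜ[ℂ] yv lm.2 ((e lm.1 lm.2).symm p).2)
  let zzf : ∀ (lm : Λ × M), Fin (n lm.1 * m lm.2) → (Z →L[ℂ] ℂ) :=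
    fun lm q => zf lm.1 lm.2 ((e lm.1 lm.2).symm q).1 ((e lm.1 lm.2).symm q).2
  let EZ : ∀ (lm : Λ × M), Matrix (Fin (n lm.1 * m lm.2)) (Fin (n lm.1 * m lm.2)) ℂ → (Z →L[ℂ] Z) :=
    fun lm c => ∑ p, ∑ q, c p q • (zzf lm q).smulRight (zz lm p)
  -- the key computation
  have hEZapply : ∀ (l : Λ) (mm : M) a b (u : X) (v : Y),
      EZ (l, mm) (kronZ l mm a b) (tc.ι (u ⊗ₜ[ℂ] v)) = tc.ι ((EX l a u) ⊗ₜ[ℂ] (EY mm b v)) := by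
    intro l mm a b u v
    have hL : (EZ (l, mm) (kronZ l mm a b)) (tc.ι (u ⊗ₜ[ℂ] v))
        = ∑ ik : Fin (n l) × Fin (m mm), ∑ jl : Fin (n l) × Fin (m mm),
            ((a ik.1 jl.1 * b ik.2 jl.2) * (xf l jl.1 u * yf mm jl.2 v))
              • tc.ι (xv l ik.1 ⊗ₜ[ℂ] yv mm ik.2) := by
      simp only [EZ, ContinuousLinearMap.sum_apply, ContinuousLinearMap.smul_apply,
        ContinuousLinearMap.smulRight_apply]
      refine Eq.symm (Fintype.sum_equiv (e l mm) _ _ fun ik => ?_)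
      refine Fintype.sum_equiv (e l mm) _ _ fun jl => ?_
      simp only [hkronZ_apply, zzf, zz, Equiv.symm_apply_apply, hzf, smul_smul]
    have hEXu : EX l a u = ∑ ij : Fin (n l) × Fin (n l), (a ij.1 ij.2 * xf l ij.2 u) • xv l ij.1 := by
      rw [Fintype.sum_prod_type]
      simp [EX, smul_smul]
    have hEYv : EY mm b v = ∑ kl : Fin (m mm) × Fin (m mm), (b kl.1 kl.2 * yf mm kl.2 v) • yv mm kl.1 := by
      rw [Fintype.sum_prod_type]
      simp [EY, smul_smul]
    have hR : tc.ι ((EX l a u) ⊗ₜ[ℂ] (EY mm b v))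
        = ∑ ij : Fin (n l) × Fin (n l), ∑ kl : Fin (m mm) × Fin (m mm),
            ((a ij.1 ij.2 * b kl.1 kl.2) * (xf l ij.2 u * yf mm kl.2 v))
              • tc.ι (xv l ij.1 ⊗ₜ[ℂ] yv mm kl.1) := by
      rw [hEXu, hEYv]
      simp only [TensorProduct.sum_tmul, TensorProduct.tmul_sum, map_sum,
        TensorProduct.tmul_smul, ← TensorProduct.smul_tmul', map_smul, smul_smul,
        Finset.smul_sum]
      rw [Finset.sum_comm]
      refine Finset.sum_congr rfl fun ij _ => Finset.sum_congr rfl fun kl _ => ?_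
      congr 1
      ring
    have st1 := (Fintype.sum_prod_type (fun q : (Fin (n l) × Fin (m mm)) × (Fin (n l) × Fin (m mm)) =>
      ((a q.1.1 q.2.1 * b q.1.2 q.2.2) * (xf l q.2.1 u * yf mm q.2.2 v))
        • tc.ι (xv l q.1.1 ⊗ₜ[ℂ] yv mm q.1.2))).symm
    have st2 := Fintype.sum_equiv
      (Equiv.prodProdProdComm (Fin (n l)) (Fin (n l)) (Fin (m mm)) (Fin (m mm)))
      (fun q : (Fin (n l) × Fin (n l)) × (Fin (m mm) × Fin (m mm)) =>
        ((a q.1.1 q.1.2 * b q.2.1 q.2.2) * (xf l q.1.2 u * yf mm q.2.2 v))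
          • tc.ι (xv l q.1.1 ⊗ₜ[ℂ] yv mm q.2.1))
      (fun q : (Fin (n l) × Fin (m mm)) × (Fin (n l) × Fin (m mm)) =>
        ((a q.1.1 q.2.1 * b q.1.2 q.2.2) * (xf l q.2.1 u * yf mm q.2.2 v))
          • tc.ι (xv l q.1.1 ⊗ₜ[ℂ] yv mm q.1.2))
      (fun q => rfl)
    have st3 := Fintype.sum_prod_type (fun q : (Fin (n l) × Fin (n l)) × (Fin (m mm) × Fin (m mm)) =>
      ((a q.1.1 q.1.2 * b q.2.1 q.2.2) * (xf l q.1.2 u * yf mm q.2.2 v))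
        • tc.ι (xv l q.1.1 ⊗ₜ[ℂ] yv mm q.2.1))
    rw [hL, st1, ← st2, st3, ← hR]
  -- EZ on Kronecker products is the canonical extension, with the tight norm bound
  have hEZtight : ∀ (l : Λ) (mm : M) a b,
      ‖EZ (l, mm) (kronZ l mm a b)‖ ≤ K * ‖EX l a‖ * ‖EY mm b‖ := by
    intro l mm a b
    obtain ⟨R, hRa, hRn⟩ := hbound (EX l a) (subset_closure (hEXfin l a))
      (EY mm b) (subset_closure (hEYfin mm b))
    have heq : EZ (l, mm) (kronZ l mm a b) = R :=
      tc.op_ext (fun u v => by rw [hEZapply, hRa])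
    rw [heq]
    exact hRn
  -- the matrix groups for Z
  let κ : ∀ (l : Λ) (mm : M),
      (Matrix (Fin (n l)) (Fin (n l)) ℂ × Matrix (Fin (m mm)) (Fin (m mm)) ℂ) →*
        Matrix (Fin (n l * m mm)) (Fin (n l * m mm)) ℂ := fun l mm =>
    { toFun := fun ab => kronZ l mm ab.1 ab.2
      map_one' := hkron_one l mm
      map_mul' := by
        rintro ⟨a₁, b₁⟩ ⟨a₂, b₂⟩
        show kronZ l mm (a₁ * a₂) (b₁ * b₂) = kronZ l mm a₁ b₁ * kronZ l mm a₂ b₂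
        have hk : Matrix.kroneckerMap (· * ·) (a₁ * a₂) (b₁ * b₂)
            = Matrix.kroneckerMap (· * ·) a₁ b₁ * Matrix.kroneckerMap (· * ·) a₂ b₂ :=
          Matrix.mul_kronecker_mul a₁ a₂ b₁ b₂
        simp only [kronZ, hk, map_mul] }
  let ψ : ∀ (l : Λ) (mm : M),
      (GL (Fin (n l)) ℂ × GL (Fin (m mm)) ℂ) →* GL (Fin (n l * m mm)) ℂ := fun l mm =>
    (Units.map (κ l mm)).comp (MulEquiv.prodUnits.symm : GL (Fin (n l)) ℂ × GL (Fin (m mm)) ℂ ≃* _).toMonoidHom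
  have hψval : ∀ (l : Λ) (mm : M) (g : GL (Fin (n l)) ℂ) (h : GL (Fin (m mm)) ℂ),
      ((ψ l mm (g, h) : GL (Fin (n l * m mm)) ℂ) : Matrix (Fin (n l * m mm)) (Fin (n l * m mm)) ℂ)
        = kronZ l mm (g : Matrix (Fin (n l)) (Fin (n l)) ℂ) (h : Matrix (Fin (m mm)) (Fin (m mm)) ℂ) := by
    intro l mm g h
    rfl
  let GZ : ∀ lm : Λ × M, Subgroup (GL (Fin (n lm.1 * m lm.2)) ℂ) :=
    fun lm => Subgroup.map (ψ lm.1 lm.2) ((GX lm.1).prod (GY lm.2))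
  have hGZfin : ∀ lm : Λ × M, ((GZ lm : Set (GL (Fin (n lm.1 * m lm.2)) ℂ))).Finite := by
    intro lm
    rw [Subgroup.coe_map]
    exact Set.Finite.image _ (by rw [Subgroup.coe_prod]; exact (hGXfin lm.1).prod (hGYfin lm.2))
  have hGZspan : ∀ lm : Λ × M, Submodule.span ℂ
      ((fun g : GL (Fin (n lm.1 * m lm.2)) ℂ =>
        (g : Matrix (Fin (n lm.1 * m lm.2)) (Fin (n lm.1 * m lm.2)) ℂ)) '' (GZ lm)) = ⊤ := by
    rintro ⟨l, mm⟩
    have himg : ((fun g : GL (Fin (n l * m mm)) ℂ =>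
        (g : Matrix (Fin (n l * m mm)) (Fin (n l * m mm)) ℂ)) '' (GZ (l, mm)))
        = (Matrix.reindexLinearEquiv ℂ ℂ (e l mm) (e l mm)) ''
            (Set.image2 (fun a b => Matrix.kroneckerMap (· * ·) a b)
              ((fun g : GL (Fin (n l)) ℂ => (g : Matrix (Fin (n l)) (Fin (n l)) ℂ)) '' (GX l))
              ((fun g : GL (Fin (m mm)) ℂ => (g : Matrix (Fin (m mm)) (Fin (m mm)) ℂ)) '' (GY mm))) := by
      ext c
      constructor
      · rintro ⟨g, hg, rfl⟩
        obtain ⟨⟨gx, gy⟩, hmem, rfl⟩ := Subgroup.mem_map.mp hg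
        rw [Subgroup.mem_prod] at hmem
        refine ⟨Matrix.kroneckerMap (· * ·) (gx : Matrix _ _ ℂ) (gy : Matrix _ _ ℂ),
          Set.mem_image2_of_mem ⟨gx, hmem.1, rfl⟩ ⟨gy, hmem.2, rfl⟩, ?_⟩
        simp only [hψval]
        simp [kronZ, Matrix.reindexLinearEquiv_apply, Matrix.reindexAlgEquiv_apply]
      · rintro ⟨u, hu, rfl⟩
        obtain ⟨a, ⟨gx, hgx, rfl⟩, b, ⟨gy, hgy, rfl⟩, rfl⟩ := hu
        refine ⟨ψ l mm (gx, gy), ⟨(gx, gy), Subgroup.mem_prod.mpr ⟨hgx, hgy⟩, rfl⟩, ?_⟩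
        simp only [hψval]
        simp [kronZ, Matrix.reindexLinearEquiv_apply, Matrix.reindexAlgEquiv_apply]
    rw [himg, Submodule.span_image_linearEquiv,
      span_kronecker_top _ _ (hGXspan l) (hGYspan mm), Submodule.map_top]
    exact LinearMap.range_eq_top.mpr (Matrix.reindexLinearEquiv ℂ ℂ (e l mm) (e l mm)).surjective
  have hGZnorm : ∀ lm : Λ × M, ∀ g ∈ GZ lm,
      ‖EZ lm (g : Matrix (Fin (n lm.1 * m lm.2)) (Fin (n lm.1 * m lm.2)) ℂ)‖ ≤ K * CX * CY := by
    rintro ⟨l, mm⟩ g hg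
    obtain ⟨⟨gx, gy⟩, hmem, rfl⟩ := Subgroup.mem_map.mp hg
    rw [Subgroup.mem_prod] at hmem
    rw [hψval]
    calc ‖EZ (l, mm) (kronZ l mm (gx : Matrix _ _ ℂ) (gy : Matrix _ _ ℂ))‖
        ≤ K * ‖EX l (gx : Matrix _ _ ℂ)‖ * ‖EY mm (gy : Matrix _ _ ℂ)‖ := hEZtight l mm _ _
      _ ≤ K * CX * CY := by
          have h1 := hGXnorm' l gx hmem.1
          have h2 := hGYnorm' mm gy hmem.2
          have hKle : (0:ℝ) ≤ K := le_of_lt hKpos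
          gcongr
  have hB0 : (0:ℝ) ≤ K * CX * CY := by positivity
  have hQnorm : ∀ lm : Λ × M, ‖EZ lm 1‖ ≤ K * CX * CY := by
    rintro ⟨l, mm⟩
    rw [← hkron_one l mm]
    calc ‖EZ (l, mm) (kronZ l mm 1 1)‖ ≤ K * ‖EX l 1‖ * ‖EY mm 1‖ := hEZtight l mm 1 1
      _ ≤ K * CX * CY := by
          have h1 := hPX l
          have h2 := hPY mm
          have hKle : (0:ℝ) ≤ K := le_of_lt hKpos
          gcongr
  have hQapply : ∀ (l : Λ) (mm : M) (u : X) (v : Y),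
      EZ (l, mm) 1 (tc.ι (u ⊗ₜ[ℂ] v)) = tc.ι ((EX l 1 u) ⊗ₜ[ℂ] (EY mm 1 v)) := by
    intro l mm u v
    rw [← hkron_one l mm, hEZapply]
  have hfst : Tendsto (fun lm : Λ × M => lm.1) atTop atTop := by
    rw [← prod_atTop_atTop_eq]; exact tendsto_fst
  have hsnd : Tendsto (fun lm : Λ × M => lm.2) atTop atTop := by
    rw [← prod_atTop_atTop_eq]; exact tendsto_snd
  -- condition (i)
  have hcond1 : ∀ w : Z, Tendsto (fun lm : Λ × M => EZ lm 1 w) atTop (𝓝 w) := by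
    intro w
    have hw : w ∈ closure (Set.range tc.ι) := by rw [tc.denseRange.closure_range]; trivial
    refine tendsto_on_closure (fun lm z => EZ lm 1 z) (K * CX * CY) hB0 ?_ ?_ w hw
    · intro t v w'
      rw [← map_sub]
      calc ‖EZ t 1 (v - w')‖ ≤ ‖EZ t 1‖ * ‖v - w'‖ := (EZ t 1).le_opNorm _
        _ ≤ (K * CX * CY) * ‖v - w'‖ := mul_le_mul_of_nonneg_right (hQnorm t) (norm_nonneg _)
    · rintro _ ⟨w0, rfl⟩
      induction w0 using TensorProduct.induction_on with
      | zero => simpa using (tendsto_const_nhds : Tendsto (fun _ : Λ × M => (0:Z)) atTop (𝓝 0))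
      | tmul u v =>
        rw [tendsto_iff_norm_sub_tendsto_zero]
        refine squeeze_zero_norm
          (a := fun lm : Λ × M => ‖EX lm.1 1 u - u‖ * (CY * ‖v‖) + ‖u‖ * ‖EY lm.2 1 v - v‖)
          (fun lm => ?_) ?_
        · rw [norm_norm]
          show ‖EZ (lm.1, lm.2) 1 (tc.ι (u ⊗ₜ[ℂ] v)) - tc.ι (u ⊗ₜ[ℂ] v)‖ ≤
            ‖EX lm.1 1 u - u‖ * (CY * ‖v‖) + ‖u‖ * ‖EY lm.2 1 v - v‖
          rw [hQapply]
          have hdecomp : tc.ι ((EX lm.1 1 u) ⊗ₜ[ℂ] (EY lm.2 1 v)) - tc.ι (u ⊗ₜ[ℂ] v)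
              = tc.ι ((EX lm.1 1 u - u) ⊗ₜ[ℂ] (EY lm.2 1 v))
                + tc.ι (u ⊗ₜ[ℂ] (EY lm.2 1 v - v)) := by
            rw [← map_add, ← map_sub]
            congr 1
            rw [TensorProduct.sub_tmul, TensorProduct.tmul_sub]
            abel
          rw [hdecomp]
          refine le_trans (norm_add_le _ _) ?_
          rw [tc.cross, tc.cross]
          have hEYb : ‖EY lm.2 1 v‖ ≤ CY * ‖v‖ :=
            le_trans ((EY lm.2 1).le_opNorm v) (mul_le_mul_of_nonneg_right (hPY lm.2) (norm_nonneg _))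
          have h2 : ‖EY lm.2 1 v - v‖ ≥ 0 := norm_nonneg _
          gcongr
        · have h1 : Tendsto (fun lm : Λ × M => ‖EX lm.1 1 u - u‖) atTop (𝓝 0) :=
            (tendsto_iff_norm_sub_tendsto_zero.mp (hX1' u)).comp hfst
          have h2 : Tendsto (fun lm : Λ × M => ‖EY lm.2 1 v - v‖) atTop (𝓝 0) :=
            (tendsto_iff_norm_sub_tendsto_zero.mp (hY1' v)).comp hsnd
          simpa using (h1.mul_const (CY * ‖v‖)).add (h2.const_mul ‖u‖)
      | add w₁ w₂ ih₁ ih₂ =>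
        simpa only [map_add] using ih₁.add ih₂
  -- convergence of right multiplication on approximable operators
  have hXcomp : ∀ S ∈ approxOps X X, Tendsto (fun l => S.comp (EX l 1)) atTop (𝓝 S) :=
    approx_comp_tendsto (fun l => EX l 1) CX hPX hX2'
  have hYcomp : ∀ T ∈ approxOps Y Y, Tendsto (fun l => T.comp (EY l 1)) atTop (𝓝 T) :=
    approx_comp_tendsto (fun l => EY l 1) CY hPY hY2'
  have hZcomp : ∀ A ∈ approxOps Z Z,
      Tendsto (fun lm : Λ × M => A.comp (EZ lm 1)) atTop (𝓝 A) := by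
    intro A hA
    rw [← htight.dense] at hA
    refine tendsto_on_closure (fun lm A => A.comp (EZ lm 1)) (K * CX * CY) hB0 ?_ ?_ A hA
    · intro t v w
      have hsub : v.comp (EZ t 1) - w.comp (EZ t 1) = (v - w).comp (EZ t 1) := by ext; simp
      rw [hsub]
      calc ‖(v - w).comp (EZ t 1)‖ ≤ ‖v - w‖ * ‖EZ t 1‖ := ContinuousLinearMap.opNorm_comp_le _ _
        _ ≤ ‖v - w‖ * (K * CX * CY) := mul_le_mul_of_nonneg_left (hQnorm t) (norm_nonneg _)
        _ = (K * CX * CY) * ‖v - w‖ := mul_comm _ _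
    · intro A hA
      induction hA using Submodule.span_induction with
      | mem R' hR' =>
        obtain ⟨S, hS, T, hT, hprop⟩ := hR'
        rw [tendsto_iff_norm_sub_tendsto_zero]
        have hd1 : ∀ lm : Λ × M, ∃ R₁ : Z →L[ℂ] Z,
            (∀ (u : X) (v : Y), R₁ (tc.ι (u ⊗ₜ[ℂ] v))
              = tc.ι (((S.comp (EX lm.1 1) - S) u) ⊗ₜ[ℂ] ((T.comp (EY lm.2 1)) v))) ∧
            ‖R₁‖ ≤ K * ‖S.comp (EX lm.1 1) - S‖ * ‖T.comp (EY lm.2 1)‖ :=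
          fun lm => hbound _ (approxOps_sub (approxOps_comp_right hS _) hS)
            _ (approxOps_comp_right hT _)
        choose R₁ hR₁a hR₁n using hd1
        have hd2 : ∀ lm : Λ × M, ∃ R₂ : Z →L[ℂ] Z,
            (∀ (u : X) (v : Y), R₂ (tc.ι (u ⊗ₜ[ℂ] v))
              = tc.ι ((S u) ⊗ₜ[ℂ] ((T.comp (EY lm.2 1) - T) v))) ∧
            ‖R₂‖ ≤ K * ‖S‖ * ‖T.comp (EY lm.2 1) - T‖ :=
          fun lm => hbound _ hS _ (approxOps_sub (approxOps_comp_right hT _) hT)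
        choose R₂ hR₂a hR₂n using hd2
        have hDeq : ∀ lm : Λ × M, R'.comp (EZ lm 1) - R' = R₁ lm + R₂ lm := by
          intro lm
          apply tc.op_ext
          intro u v
          simp only [ContinuousLinearMap.sub_apply, ContinuousLinearMap.add_apply,
            ContinuousLinearMap.comp_apply]
          have hlm : EZ lm 1 = EZ (lm.1, lm.2) 1 := by rfl
          rw [hlm, hQapply, hprop, hprop, hR₁a, hR₂a]
          rw [← map_sub, ← map_add]
          congr 1
          simp only [ContinuousLinearMap.sub_apply, ContinuousLinearMap.comp_apply,
            TensorProduct.sub_tmul, TensorProduct.tmul_sub]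
          abel
        refine squeeze_zero_norm
          (a := fun lm : Λ × M => K * ‖S.comp (EX lm.1 1) - S‖ * (‖T‖ * CY)
            + K * ‖S‖ * ‖T.comp (EY lm.2 1) - T‖)
          (fun lm => ?_) ?_
        · rw [norm_norm, hDeq]
          calc ‖R₁ lm + R₂ lm‖ ≤ ‖R₁ lm‖ + ‖R₂ lm‖ := norm_add_le _ _
            _ ≤ K * ‖S.comp (EX lm.1 1) - S‖ * (‖T‖ * CY) + K * ‖S‖ * ‖T.comp (EY lm.2 1) - T‖ := by
                refine add_le_add (le_trans (hR₁n lm) ?_) (hR₂n lm)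
                have hTb : ‖T.comp (EY lm.2 1)‖ ≤ ‖T‖ * CY :=
                  le_trans (ContinuousLinearMap.opNorm_comp_le _ _)
                    (mul_le_mul_of_nonneg_left (hPY lm.2) (norm_nonneg _))
                have hKle : (0:ℝ) ≤ K := le_of_lt hKpos
                gcongr
        · have h1 : Tendsto (fun lm : Λ × M => ‖S.comp (EX lm.1 1) - S‖) atTop (𝓝 0) :=
            (tendsto_iff_norm_sub_tendsto_zero.mp (hXcomp S hS)).comp hfst
          have h2 : Tendsto (fun lm : Λ × M => ‖T.comp (EY lm.2 1) - T‖) atTop (𝓝 0) :=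
            (tendsto_iff_norm_sub_tendsto_zero.mp (hYcomp T hT)).comp hsnd
          simpa using ((h1.const_mul K).mul_const (‖T‖ * CY)).add ((h2.const_mul (K * ‖S‖)))
      | zero =>
        simpa only [ContinuousLinearMap.zero_comp] using
          (tendsto_const_nhds : Tendsto (fun _ : Λ × M => (0 : Z →L[ℂ] Z)) atTop (𝓝 0))
      | add A₁ A₂ h₁ h₂ ih₁ ih₂ =>
        simpa only [ContinuousLinearMap.add_comp] using ih₁.add ih₂
      | smul c A₁ h₁ ih₁ =>
        simpa only [ContinuousLinearMap.smul_comp] using ih₁.const_smul c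
  -- condition (ii)
  have hcond2 : ∀ f : Z →L[ℂ] ℂ, Tendsto (fun lm : Λ × M => f.comp (EZ lm 1)) atTop (𝓝 f) := by
    intro f
    by_cases hf : f = 0
    · subst hf
      simpa only [ContinuousLinearMap.zero_comp] using
        (tendsto_const_nhds : Tendsto (fun _ : Λ × M => (0 : Z →L[ℂ] ℂ)) atTop (𝓝 0))
    · have hz0 : ∃ z₀ : Z, f z₀ ≠ 0 := by
        by_contra hc
        push_neg at hc
        exact hf (ContinuousLinearMap.ext fun z => by simpa using hc z)
      obtain ⟨z₀, hz₀⟩ := hz0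
      have hz₀ne : z₀ ≠ 0 := fun h => hz₀ (by simp [h])
      set u : Z := (‖z₀‖ : ℂ)⁻¹ • z₀ with hu_def
      have hu : ‖u‖ = 1 := norm_smul_inv_norm hz₀ne
      have hAmem : f.smulRight u ∈ approxOps Z Z := subset_closure (smulRight_mem_finRankOps f u)
      have hA := hZcomp _ hAmem
      rw [tendsto_iff_norm_sub_tendsto_zero] at hA ⊢
      refine squeeze_zero_norm (fun lm => ?_) hA
      rw [norm_norm]
      have heq : (f.smulRight u).comp (EZ lm 1) - f.smulRight u
          = (f.comp (EZ lm 1) - f).smulRight u := by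
        ext; simp [sub_smul]
      have : ‖(f.smulRight u).comp (EZ lm 1) - f.smulRight u‖ = ‖f.comp (EZ lm 1) - f‖ := by
        rw [heq, ContinuousLinearMap.norm_smulRight_apply, hu, mul_one]
      rw [← this]
  -- assemble
  have hdirZ : IsDirected (Λ × M) (· ≤ ·) := by
    constructor
    rintro ⟨a1, a2⟩ ⟨b1, b2⟩
    obtain ⟨l, hl1, hl2⟩ := directed_of (· ≤ ·) a1 b1
    obtain ⟨mm, hm1, hm2⟩ := directed_of (· ≤ ·) a2 b2
    exact ⟨(l, mm), ⟨hl1, hm1⟩, ⟨hl2, hm2⟩⟩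
  refine ⟨Λ × M, ⟨⟨Classical.arbitrary Λ, Classical.arbitrary M⟩⟩, inferInstance, hdirZ,
    (fun lm => n lm.1 * m lm.2), zz, zzf, ?_, ?_, ?_, GZ, K * CX * CY, hGZfin, hGZspan, hGZnorm⟩
  · -- biorthogonality
    intro lm p q
    have hval : zzf lm q (zz lm p)
        = xf lm.1 ((e lm.1 lm.2).symm q).1 (xv lm.1 ((e lm.1 lm.2).symm p).1)
          * yf lm.2 ((e lm.1 lm.2).symm q).2 (yv lm.2 ((e lm.1 lm.2).symm p).2) :=
      hzf lm.1 lm.2 _ _ _ _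
    rw [hval, hbiX, hbiY]
    by_cases h : p = q
    · subst h; simp
    · have hne' : ¬(((e lm.1 lm.2).symm p).1 = ((e lm.1 lm.2).symm q).1
          ∧ ((e lm.1 lm.2).symm p).2 = ((e lm.1 lm.2).symm q).2) := by
        rintro ⟨h1, h2⟩
        exact h ((e lm.1 lm.2).symm.injective (Prod.ext h1 h2))
      rw [if_neg h]
      by_cases h1 : ((e lm.1 lm.2).symm p).1 = ((e lm.1 lm.2).symm q).1
      · rw [if_pos h1, if_neg (fun h2 => hne' ⟨h1, h2⟩), one_mul]
      · rw [if_neg h1, zero_mul]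
  · exact hcond1
  · exact hcond2

end
end
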